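/- Consider the symmetric hyperbolic system ∂_t V + V·∇V + ∇(|A|²) = 0, ∂_t A + V·∇A + (m/2) A div V = 0 on ℝ^d with V(0) = 0 and A(0) = a_init^m for a_init ∈ C_c^∞(ℝ^d). If (V, A) is a smooth solution on [0,T] with locally bounded spatial derivatives, then for all t ∈ [0,T], the supports satisfy supp A(t) ∪ supp V(t) ⊆ supp a_init; moreover (A(t,x), V(t,x)) = (0,0) if and only if (A(0,x), V(0,x)) = (0,0). -/

import Mathlib

open MeasureTheory Real

private lemma coord_le_norm {d : ℕ} (z : EuclideanSpace ℝ (Fin d)) (j : Fin d) :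
    ‖z j‖ ≤ ‖z‖ := by
  rw [EuclideanSpace.norm_eq]
  rw [show ‖z j‖ = √(‖z j‖ ^ 2) by rw [Real.sqrt_sq (norm_nonneg _)]]
  exact Real.sqrt_le_sqrt (Finset.single_le_sum (f := fun i => ‖z i‖ ^ 2)
    (fun i _ => by positivity) (Finset.mem_univ j))

private lemma innerSL_bound (E : Type*) [NormedAddCommGroup E] [InnerProductSpace ℝ E]
    {G : Type*} [NormedAddCommGroup G] [NormedSpace ℝ G]
    (L : G →L[ℝ] E) (a : E) (v : G) :
    ‖(2 • (innerSL ℝ a).comp L) v‖ ≤ 2 * ‖a‖ * ‖L v‖ := by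
  simp only [ContinuousLinearMap.smul_apply, ContinuousLinearMap.comp_apply, innerSL_apply_apply,
    two_smul]
  have h := abs_real_inner_le_norm a (L v)
  calc ‖(inner ℝ a (L v) : ℝ) + inner ℝ a (L v)‖ ≤ ‖(inner ℝ a (L v) : ℝ)‖ + ‖(inner ℝ a (L v) : ℝ)‖ :=
        norm_add_le _ _
    _ ≤ 2 * ‖a‖ * ‖L v‖ := by rw [Real.norm_eq_abs]; nlinarith

private lemma arith1 (C F B1 B2 : ℝ) (d m : ℕ) (h1 : B1 ≤ d * (F * C)) (h2 : B2 ≤ 2 * F * C)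
    (hc : 0 ≤ C) (hf : 0 ≤ F) : B1 + B2 ≤ C * (2 + 2 * d + d * m) * F := by
  have p1 : (0:ℝ) ≤ C * F := mul_nonneg hc hf
  have p2 : (0:ℝ) ≤ C * F * d := mul_nonneg p1 (Nat.cast_nonneg d)
  have p3 : (0:ℝ) ≤ C * F * d * m := mul_nonneg p2 (Nat.cast_nonneg m)
  nlinarith [p1, p2, p3]

private lemma arith2 (C F B1 B2 : ℝ) (d m : ℕ) (h1 : B1 ≤ d * (F * C))
    (h2 : B2 ≤ (m : ℝ) / 2 * (F * ((d:ℝ) * C)))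
    (hc : 0 ≤ C) (hf : 0 ≤ F) : B1 + B2 ≤ C * (2 + 2 * d + d * m) * F := by
  have p1 : (0:ℝ) ≤ C * F := mul_nonneg hc hf
  have p2 : (0:ℝ) ≤ C * F * d := mul_nonneg p1 (Nat.cast_nonneg d)
  have p3 : (0:ℝ) ≤ C * F * d * m := mul_nonneg p2 (Nat.cast_nonneg m)
  nlinarith [p1, p2, p3]

/-- Zero speed of propagation (Makino–Ukai–Kawashima) for the symmetric hyperbolic system
`∂_t V + V·∇V + ∇(|A|²) = 0`, `∂_t A + V·∇A + (m/2) A div V = 0` with `V(0) = 0`,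
`A(0) = a_init^m`, `a_init ∈ C_c^∞`: for a smooth solution with locally bounded spatial
derivatives, the supports of `A(t)`, `V(t)` stay inside `supp a_init`, and
`(A(t,x), V(t,x)) = 0` iff `(A(0,x), V(0,x)) = 0`. -/
theorem stmt12 (d m : ℕ) (hd : 1 ≤ d) (hm : 1 ≤ m) (T : ℝ) (hT : 0 ≤ T)
    (a0 : EuclideanSpace ℝ (Fin d) → ℂ) (ha1 : ContDiff ℝ (⊤ : ℕ∞) a0)
    (ha2 : HasCompactSupport a0)
    (V : ℝ → EuclideanSpace ℝ (Fin d) → EuclideanSpace ℝ (Fin d))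
    (A : ℝ → EuclideanSpace ℝ (Fin d) → ℂ)
    (hsmooth : ∀ t ∈ Set.Icc (0 : ℝ) T, ContDiff ℝ (⊤ : ℕ∞) (V t) ∧ ContDiff ℝ (⊤ : ℕ∞) (A t))
    (htV : ∀ x j, Differentiable ℝ (fun t => V t x j))
    (htA : ∀ x, Differentiable ℝ (fun t => A t x))
    (hV0 : ∀ x, V 0 x = 0) (hA0 : ∀ x, A 0 x = (a0 x) ^ m)
    (hbound : ∀ x, ∃ C : ℝ, ∀ t ∈ Set.Icc (0 : ℝ) T,
      ‖fderiv ℝ (V t) x‖ + ‖fderiv ℝ (A t) x‖ ≤ C)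
    (hpdeV : ∀ t ∈ Set.Icc (0 : ℝ) T, ∀ x, ∀ j : Fin d,
      deriv (fun τ => V τ x j) t
        + (∑ i : Fin d, V t x i *
            fderiv ℝ (fun y => V t y j) x (EuclideanSpace.single i 1))
        + fderiv ℝ (fun y => ‖A t y‖ ^ 2) x (EuclideanSpace.single j 1) = 0)
    (hpdeA : ∀ t ∈ Set.Icc (0 : ℝ) T, ∀ x,
      deriv (fun τ => A τ x) t
        + (∑ i : Fin d, (V t x i : ℂ) * fderiv ℝ (A t) x (EuclideanSpace.single i 1))
        + ((m : ℂ) / 2) * A t x *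
            (∑ i : Fin d,
              ((fderiv ℝ (fun y => V t y i) x (EuclideanSpace.single i 1) : ℝ) : ℂ)) = 0) :
    ∀ t ∈ Set.Icc (0 : ℝ) T,
      (∀ x, x ∉ tsupport a0 → A t x = 0 ∧ V t x = 0) ∧
      (∀ x, (A t x = 0 ∧ V t x = 0) ↔ (A 0 x = 0 ∧ V 0 x = 0)) := by
  have key : ∀ x : EuclideanSpace ℝ (Fin d), ∀ t₀ ∈ Set.Icc (0:ℝ) T, ∀ t₁ ∈ Set.Icc (0:ℝ) T,
      (A t₀ x = 0 ∧ V t₀ x = 0) → (A t₁ x = 0 ∧ V t₁ x = 0) := by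
    intro x t₀ ht₀ t₁ ht₁ h0
    obtain ⟨C, hC⟩ := hbound x
    have hC0 : 0 ≤ C := le_trans (by positivity) (hC 0 ⟨le_refl 0, hT⟩)
    set K : ℝ := C * (2 + 2 * d + d * m) with hKdef
    have hK0 : 0 ≤ K := by positivity
    set f : ℝ → ℂ × (Fin d → ℝ) := fun t => (A t x, fun j => V t x j) with hfdef
    set f' : ℝ → ℂ × (Fin d → ℝ) :=
      fun t => (deriv (fun τ => A τ x) t, fun j => deriv (fun τ => V τ x j) t) with hf'def
    have hderiv : ∀ t, HasDerivAt f (f' t) t := fun t =>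
      ((htA x).differentiableAt.hasDerivAt).prodMk
        (hasDerivAt_pi.2 fun j => ((htV x j).differentiableAt.hasDerivAt))
    have hfz : ∀ s, f s = 0 ↔ (A s x = 0 ∧ V s x = 0) := by
      intro s
      constructor
      · intro h
        refine ⟨congrArg Prod.fst h, ?_⟩
        ext j
        simpa using congrFun (congrArg Prod.snd h) j
      · rintro ⟨h1, h2⟩
        simp only [hfdef, h1]
        refine Prod.ext rfl ?_
        funext j
        simp [h2]
    -- the Gronwall bound
    have hbnd : ∀ t ∈ Set.Icc (0:ℝ) T, ‖f' t‖ ≤ K * ‖f t‖ := by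
      intro t ht
      obtain ⟨hVs, hAs⟩ := hsmooth t ht
      have hCt := hC t ht
      have hDV : ‖fderiv ℝ (V t) x‖ ≤ C := le_trans (le_add_of_nonneg_right (norm_nonneg _)) hCt
      have hDA : ‖fderiv ℝ (A t) x‖ ≤ C := le_trans (le_add_of_nonneg_left (norm_nonneg _)) hCt
      have hfA : ‖A t x‖ ≤ ‖f t‖ := norm_fst_le (f t)
      have hfV : ∀ i : Fin d, ‖V t x i‖ ≤ ‖f t‖ := fun i =>
        le_trans (norm_le_pi_norm (f t).2 i) (norm_snd_le (f t))
      have hfnn : (0:ℝ) ≤ ‖f t‖ := norm_nonneg _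
      have hsingle : ∀ i : Fin d, ‖EuclideanSpace.single i (1:ℝ)‖ = 1 := by
        intro i; rw [EuclideanSpace.norm_single]; simp
      have hAdb : ∀ i : Fin d, ‖fderiv ℝ (A t) x (EuclideanSpace.single i 1)‖ ≤ C := by
        intro i
        calc ‖fderiv ℝ (A t) x (EuclideanSpace.single i 1)‖
            ≤ ‖fderiv ℝ (A t) x‖ * ‖EuclideanSpace.single i (1:ℝ)‖ :=
              (fderiv ℝ (A t) x).le_opNorm _
          _ ≤ C := by rw [hsingle i, mul_one]; exact hDA
      have hVd : ∀ j : Fin d, fderiv ℝ (fun y => V t y j) x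
          = (EuclideanSpace.proj j).comp (fderiv ℝ (V t) x) := fun j =>
        ((EuclideanSpace.proj (𝕜 := ℝ) j).hasFDerivAt.comp x
          (hVs.differentiable (by simp) x).hasFDerivAt).fderiv
      have hVdb : ∀ j i : Fin d, ‖fderiv ℝ (fun y => V t y j) x (EuclideanSpace.single i 1)‖ ≤ C := by
        intro j i
        rw [hVd j]
        calc ‖(EuclideanSpace.proj j).comp (fderiv ℝ (V t) x) (EuclideanSpace.single i 1)‖
            = ‖(fderiv ℝ (V t) x (EuclideanSpace.single i 1)) j‖ := rfl
          _ ≤ ‖fderiv ℝ (V t) x (EuclideanSpace.single i 1)‖ := coord_le_norm _ j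
          _ ≤ ‖fderiv ℝ (V t) x‖ * ‖EuclideanSpace.single i (1:ℝ)‖ :=
              (fderiv ℝ (V t) x).le_opNorm _
          _ ≤ C := by rw [hsingle i, mul_one]; exact hDV
      have hNS : fderiv ℝ (fun y => ‖A t y‖ ^ 2) x
          = 2 • (innerSL ℝ (A t x)).comp (fderiv ℝ (A t) x) :=
        ((hAs.differentiable (by simp) x).hasFDerivAt.norm_sq).fderiv
      have hNSb : ∀ j : Fin d, ‖fderiv ℝ (fun y => ‖A t y‖ ^ 2) x (EuclideanSpace.single j 1)‖
          ≤ 2 * ‖f t‖ * C := by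
        intro j
        rw [hNS]
        calc ‖(2 • (innerSL ℝ (A t x)).comp (fderiv ℝ (A t) x)) (EuclideanSpace.single j 1)‖
            ≤ 2 * ‖A t x‖ * ‖fderiv ℝ (A t) x (EuclideanSpace.single j 1)‖ :=
              innerSL_bound ℂ _ _ _
          _ ≤ 2 * ‖f t‖ * C := by
              nlinarith [hAdb j, norm_nonneg (A t x), norm_nonneg (fderiv ℝ (A t) x (EuclideanSpace.single j 1))]
      -- bound on the V components of f'
      have hVj : ∀ j : Fin d, ‖deriv (fun τ => V τ x j) t‖ ≤ K * ‖f t‖ := by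
        intro j
        have h := hpdeV t ht x j
        have heq : deriv (fun τ => V τ x j) t
            = -((∑ i : Fin d, V t x i *
                fderiv ℝ (fun y => V t y j) x (EuclideanSpace.single i 1))
              + fderiv ℝ (fun y => ‖A t y‖ ^ 2) x (EuclideanSpace.single j 1)) := by
          linarith
        rw [heq, norm_neg]
        have hsum : ‖∑ i : Fin d, V t x i *
            fderiv ℝ (fun y => V t y j) x (EuclideanSpace.single i 1)‖ ≤ d * (‖f t‖ * C) := by
          calc ‖∑ i : Fin d, V t x i *
              fderiv ℝ (fun y => V t y j) x (EuclideanSpace.single i 1)‖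
              ≤ ∑ i : Fin d, ‖V t x i *
                fderiv ℝ (fun y => V t y j) x (EuclideanSpace.single i 1)‖ :=
                norm_sum_le _ _
            _ ≤ ∑ _i : Fin d, ‖f t‖ * C := by
                refine Finset.sum_le_sum fun i _ => ?_
                rw [norm_mul]
                exact mul_le_mul (hfV i) (hVdb j i) (norm_nonneg _) hfnn
            _ = d * (‖f t‖ * C) := by simp [mul_comm]
        refine le_trans (norm_add_le _ _) ?_
        rw [hKdef]
        exact arith1 C (‖f t‖) _ _ d m hsum (hNSb j) hC0 hfnn
      -- bound on the A component of f'
      have hAc : ‖deriv (fun τ => A τ x) t‖ ≤ K * ‖f t‖ := by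
        have h := hpdeA t ht x
        have heq : deriv (fun τ => A τ x) t
            = -((∑ i : Fin d, (V t x i : ℂ) *
                fderiv ℝ (A t) x (EuclideanSpace.single i 1))
              + ((m : ℂ) / 2) * A t x *
                (∑ i : Fin d,
                  ((fderiv ℝ (fun y => V t y i) x (EuclideanSpace.single i 1) : ℝ) : ℂ))) := by
          linear_combination h
        rw [heq, norm_neg]
        have hsum1 : ‖∑ i : Fin d, (V t x i : ℂ) *
            fderiv ℝ (A t) x (EuclideanSpace.single i 1)‖ ≤ d * (‖f t‖ * C) := by
          calc ‖∑ i : Fin d, (V t x i : ℂ) *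
              fderiv ℝ (A t) x (EuclideanSpace.single i 1)‖
              ≤ ∑ i : Fin d, ‖(V t x i : ℂ) *
                fderiv ℝ (A t) x (EuclideanSpace.single i 1)‖ := norm_sum_le _ _
            _ ≤ ∑ _i : Fin d, ‖f t‖ * C := by
                refine Finset.sum_le_sum fun i _ => ?_
                rw [norm_mul, Complex.norm_real]
                exact mul_le_mul (hfV i) (hAdb i) (norm_nonneg _) hfnn
            _ = d * (‖f t‖ * C) := by simp [mul_comm]
        have hsum2 : ‖(∑ i : Fin d,
            ((fderiv ℝ (fun y => V t y i) x (EuclideanSpace.single i 1) : ℝ) : ℂ))‖ ≤ d * C := by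
          calc ‖(∑ i : Fin d,
              ((fderiv ℝ (fun y => V t y i) x (EuclideanSpace.single i 1) : ℝ) : ℂ))‖
              ≤ ∑ i : Fin d, ‖((fderiv ℝ (fun y => V t y i) x
                  (EuclideanSpace.single i 1) : ℝ) : ℂ)‖ := norm_sum_le _ _
            _ ≤ ∑ _i : Fin d, C := by
                refine Finset.sum_le_sum fun i _ => ?_
                rw [Complex.norm_real]
                exact hVdb i i
            _ = d * C := by simp [mul_comm]
        have hm2 : ‖((m : ℂ) / 2)‖ = (m : ℝ) / 2 := by
          rw [norm_div]
          simp
        refine le_trans (norm_add_le _ _) ?_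
        have hb2 : ‖((m : ℂ) / 2) * A t x *
            (∑ i : Fin d,
              ((fderiv ℝ (fun y => V t y i) x (EuclideanSpace.single i 1) : ℝ) : ℂ))‖
            ≤ (m : ℝ) / 2 * (‖f t‖ * ((d:ℝ) * C)) := by
          rw [norm_mul, norm_mul, hm2, mul_assoc]
          refine mul_le_mul_of_nonneg_left ?_ (by positivity)
          exact mul_le_mul hfA hsum2 (norm_nonneg _) hfnn
        rw [hKdef]
        exact arith2 C (‖f t‖) _ _ d m hsum1 hb2 hC0 hfnn
      -- combine
      have h2 : ‖(f' t).2‖ ≤ K * ‖f t‖ := by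
        refine (pi_norm_le_iff_of_nonneg (by positivity)).2 fun j => ?_
        exact hVj j
      rw [Prod.norm_def]
      exact max_le hAc h2
    -- forward Gronwall
    have gron : ∀ s₀ s₁ : ℝ, s₀ ≤ s₁ → 0 ≤ s₀ → s₁ ≤ T → f s₀ = 0 → f s₁ = 0 := by
      intro s₀ s₁ hle hs0 hs1 hz
      have hcont : ContinuousOn f (Set.Icc s₀ s₁) := fun s _ =>
        ((hderiv s).differentiableAt.continuousAt).continuousWithinAt
      have hb := norm_le_gronwallBound_of_norm_deriv_right_le (f := f) (f' := f')
        (δ := 0) (K := K) (ε := 0) (a := s₀) (b := s₁) hcont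
        (fun s _ => (hderiv s).hasDerivWithinAt)
        (by simp [hz])
        (fun s hs => by
          have hsI : s ∈ Set.Icc (0:ℝ) T := ⟨le_trans hs0 hs.1, le_trans hs.2.le hs1⟩
          simpa using hbnd s hsI)
        s₁ ⟨hle, le_refl _⟩
      rw [gronwallBound_ε0_δ0] at hb
      exact norm_le_zero_iff.1 hb
    -- backward Gronwall
    have gronb : ∀ s₀ s₁ : ℝ, s₁ ≤ s₀ → 0 ≤ s₁ → s₀ ≤ T → f s₀ = 0 → f s₁ = 0 := by
      intro s₀ s₁ hle hs1 hs0 hz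
      set g : ℝ → ℂ × (Fin d → ℝ) := fun s => f (s₀ - s) with hgdef
      have hgd : ∀ s, HasDerivAt g (-f' (s₀ - s)) s := by
        intro s
        have h1 : HasDerivAt (fun s : ℝ => s₀ - s) (-1) s := by
          simpa using (hasDerivAt_id s).const_sub s₀
        have := (hderiv (s₀ - s)).scomp s h1
        simpa [hgdef, Function.comp_def] using this
      have hcont : ContinuousOn g (Set.Icc 0 (s₀ - s₁)) := fun s _ =>
        ((hgd s).differentiableAt.continuousAt).continuousWithinAt
      have hb := norm_le_gronwallBound_of_norm_deriv_right_le (f := g)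
        (f' := fun s => -f' (s₀ - s)) (δ := 0) (K := K) (ε := 0) (a := 0) (b := s₀ - s₁) hcont
        (fun s _ => (hgd s).hasDerivWithinAt)
        (by simp [hgdef, hz])
        (fun s hs => by
          have hsI : s₀ - s ∈ Set.Icc (0:ℝ) T := by
            constructor
            · have := hs.2
              simp only [Set.mem_Ico] at hs
              linarith
            · have := hs.1
              linarith
          simpa [hgdef] using hbnd (s₀ - s) hsI)
        (s₀ - s₁) ⟨by linarith, le_refl _⟩
      rw [gronwallBound_ε0_δ0] at hb
      have : g (s₀ - s₁) = 0 := norm_le_zero_iff.1 hb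
      simpa [hgdef] using this
    have hz0 : f t₀ = 0 := (hfz t₀).2 h0
    rcases le_total t₀ t₁ with hle | hle
    · exact (hfz t₁).1 (gron t₀ t₁ hle ht₀.1 ht₁.2 hz0)
    · exact (hfz t₁).1 (gronb t₀ t₁ hle ht₁.1 ht₀.2 hz0)
  intro t ht
  refine ⟨?_, ?_⟩
  · intro x hx
    have ha : a0 x = 0 := image_eq_zero_of_notMem_tsupport hx
    refine key x 0 ⟨le_refl 0, hT⟩ t ht ⟨?_, hV0 x⟩
    rw [hA0, ha]
    exact zero_pow (by omega)
  · intro x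
    exact ⟨key x t ht 0 ⟨le_refl 0, hT⟩, key x 0 ⟨le_refl 0, hT⟩ t ht⟩
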